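/- The operator ∇̃_{·} f_n is not Hilbert-Schmidt: the series Σ_{m≥1} (⟨∇̃_{f_m} f_n, ∇̃_{f_m} f_n⟩ + ⟨∇̃_{g_m} f_n, ∇̃_{g_m} f_n⟩) over the orthonormal-type basis diverges; specifically Σ_{m>n} λ_{m,n}² θ_{n+m}/(θ_n θ_m) = +∞. -/

import Mathlib

open Filter

/-- `θ_k = 2hk + (c/12)(k³ - k)` -/
noncomputable def th (c h : ℝ) (k : ℤ) : ℝ := 2 * h * k + c / 12 * ((k : ℝ) ^ 3 - k)

/-- `λ_{m,n} = (2n+m)θ_m / (2θ_{m+n})` -/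
noncomputable def lam (c h : ℝ) (m n : ℤ) : ℝ :=
  (2 * (n : ℝ) + m) * th c h m / (2 * th c h (m + n))

/-- the `m`-th term `⟨∇̃_{f_m} f_n, ∇̃_{f_m} f_n⟩ + ⟨∇̃_{g_m} f_n, ∇̃_{g_m} f_n⟩`
of the Hilbert-Schmidt series for `∇̃_· f_n` -/
noncomputable def hsTerm (c h : ℝ) (n m : ℕ) : ℝ :=
  if m < n then
    lam c h m n ^ 2 * th c h (n + m) / (th c h n * th c h m)
      + ((m : ℝ) + n) ^ 2 * th c h (n - m) / (4 * th c h n * th c h m)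
  else if m = n then lam c h n n ^ 2 * th c h (2 * n) / (th c h n ^ 2)
  else lam c h m n ^ 2 * th c h (n + m) / (th c h n * th c h m)

/-!
For `m > n` the `m`-th term equals `(2n+m)² θ_m / (4 θ_n θ_{n+m})`. Since `θ` is increasing and
`θ_{2m} ≤ 9 θ_m` for `m ≥ 3`, this is at least `m² / (36 θ_n)` once `m ≥ max n 3`. The terms
therefore tend to infinity, and a series of eventually nonnegative terms that do not tend to zero
diverges to `+∞`.
-/

theorem tendsto_sum_Icc_atTop_of_nonneg {f : ℕ → ℝ} {a : ℕ} (hf : ∀ m, a ≤ m → 0 ≤ f m)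
    (hlim : ¬Tendsto f atTop (nhds 0)) :
    Tendsto (fun M => ∑ m ∈ Finset.Icc a M, f m) atTop atTop := by
  have hshift : ¬Summable fun k => f (a + k) := fun hs =>
    hlim <| (tendsto_add_atTop_iff_nat a).1 <| by simpa only [add_comm] using hs.tendsto_atTop_zero
  have hrange := (not_summable_iff_tendsto_nat_atTop_of_nonneg fun k => hf _ (by omega)).1 hshift
  refine (hrange.comp ((tendsto_sub_atTop_nat a).comp (tendsto_add_atTop_nat 1))).congr fun M => ?_
  simp only [Function.comp_apply, ← Finset.sum_Ico_eq_sum_range, Finset.Ico_add_one_right_eq_Icc]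

variable {c h : ℝ}

theorem th_pos (hc : 0 ≤ c) (hh : 0 < h) {k : ℤ} (hk : 1 ≤ k) : 0 < th c h k := by
  have hk' : (1 : ℝ) ≤ k := by exact_mod_cast hk
  have hcube : 0 ≤ (k : ℝ) ^ 3 - k := by
    nlinarith [mul_nonneg (sub_nonneg.2 hk') (by positivity : (0 : ℝ) ≤ k ^ 2 + k)]
  unfold th
  nlinarith [mul_nonneg hc hcube]

theorem th_monotoneOn (hc : 0 ≤ c) (hh : 0 ≤ h) : MonotoneOn (th c h) (Set.Ici 1) := by
  intro j hj k _ hjk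
  have hj' : (1 : ℝ) ≤ j := by exact_mod_cast hj
  have hjk' : (j : ℝ) ≤ k := by exact_mod_cast hjk
  -- `θ_k - θ_j = (k - j) (2h + (c/12)(k² + kj + j² - 1))`
  have hquad : 0 ≤ (k : ℝ) ^ 2 + k * j + j ^ 2 - 1 := by nlinarith
  unfold th
  nlinarith [mul_nonneg (sub_nonneg.2 hjk') hh, mul_nonneg (mul_nonneg (sub_nonneg.2 hjk') hc) hquad]

theorem th_two_mul_le (hc : 0 ≤ c) (hh : 0 ≤ h) {k : ℤ} (hk : 3 ≤ k) :
    th c h (2 * k) ≤ 9 * th c h k := by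
  have hk' : (3 : ℝ) ≤ k := by exact_mod_cast hk
  -- `9 θ_k - θ_{2k} = 14hk + (c/12)(k³ - 7k)`
  unfold th
  push_cast
  nlinarith [mul_nonneg hc (mul_nonneg (sub_nonneg.2 hk') (by positivity : (0 : ℝ) ≤ k ^ 2 + 3 * k)),
    mul_nonneg hh (by positivity : (0 : ℝ) ≤ k)]

theorem lam_sq_mul_th_div (m n : ℤ) :
    lam c h m n ^ 2 * th c h (n + m) / (th c h n * th c h m)
      = (2 * (n : ℝ) + m) ^ 2 * th c h m / (4 * th c h n * th c h (n + m)) := by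
  rw [lam, add_comm m n]
  rcases eq_or_ne (th c h m) 0 with hm | hm
  · simp [hm]
  rcases eq_or_ne (th c h (n + m)) 0 with hnm | hnm
  · simp [hnm]
  field_simp
  ring

theorem tendsto_lam_sq_mul_th_div_atTop (hc : 0 ≤ c) (hh : 0 < h) {n : ℕ} (hn : 1 ≤ n) :
    Tendsto (fun m : ℕ => lam c h m n ^ 2 * th c h (n + m) / (th c h n * th c h m))
      atTop atTop := by
  have hθn : 0 < th c h n := th_pos hc hh (by exact_mod_cast hn)
  have hlower : Tendsto (fun m : ℕ => (m : ℝ) ^ 2 / (36 * th c h n)) atTop atTop :=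
    ((tendsto_pow_atTop two_ne_zero).comp tendsto_natCast_atTop_atTop).atTop_div_const
      (by positivity)
  refine tendsto_atTop_mono' atTop ?_ hlower
  filter_upwards [eventually_ge_atTop (max n 3)] with m hm
  have hm3 : (3 : ℤ) ≤ m := by omega
  have hθm : 0 < th c h m := th_pos hc hh (by omega)
  have hθnm : th c h (n + m) ≤ 9 * th c h m :=
    (th_monotoneOn hc hh.le (by simp; omega) (by simp; omega) (by omega)).trans
      (th_two_mul_le hc hh.le hm3)
  have hθnm_pos : 0 < th c h (n + m) := th_pos hc hh (by omega)
  rw [lam_sq_mul_th_div]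
  calc (m : ℝ) ^ 2 / (36 * th c h n)
      = (m : ℝ) ^ 2 * th c h m / (4 * th c h n * (9 * th c h m)) := by field_simp; ring
    _ ≤ (2 * (n : ℝ) + m) ^ 2 * th c h m / (4 * th c h n * th c h (n + m)) := by
      gcongr
      linarith [(n.cast_nonneg : (0 : ℝ) ≤ n)]

theorem hsTerm_of_lt {n m : ℕ} (hnm : n < m) :
    hsTerm c h n m = lam c h m n ^ 2 * th c h (n + m) / (th c h n * th c h m) := by
  rw [hsTerm, if_neg (by omega), if_neg (by omega)]

theorem hsTerm_nonneg (hc : 0 ≤ c) (hh : 0 < h) {n m : ℕ} (hn : 1 ≤ n) (hm : 1 ≤ m) :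
    0 ≤ hsTerm c h n m := by
  have hθ : ∀ k : ℤ, 1 ≤ k → 0 ≤ th c h k := fun k hk => (th_pos hc hh hk).le
  have := hθ n (by omega)
  have := hθ m (by omega)
  have := hθ (n + m) (by omega)
  unfold hsTerm
  split_ifs with hlt heq
  · have := hθ (n - m) (by omega)
    positivity
  · have := hθ (2 * n) (by omega)
    positivity
  · positivity

/-- The operator `∇̃_· f_n` is not Hilbert-Schmidt: the series
`Σ_{m≥1} (⟨∇̃_{f_m}f_n, ∇̃_{f_m}f_n⟩ + ⟨∇̃_{g_m}f_n, ∇̃_{g_m}f_n⟩)` diverges to `+∞`;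
specifically `Σ_{m>n} λ_{m,n}² θ_{n+m}/(θ_n θ_m) = +∞`. -/
theorem nablaTilde_not_HS (c h : ℝ) (hc : 0 < c) (hh : 0 < h) (n : ℕ) (hn : 1 ≤ n) :
    Tendsto (fun M => ∑ m ∈ Finset.Icc 1 M, hsTerm c h n m) atTop atTop ∧
    Tendsto (fun M => ∑ m ∈ Finset.Icc (n + 1) M,
      lam c h m n ^ 2 * th c h (n + m) / (th c h n * th c h m)) atTop atTop := by
  have hterms := tendsto_lam_sq_mul_th_div_atTop hc.le hh hn
  have hhsTerm : Tendsto (hsTerm c h n) atTop atTop :=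
    hterms.congr' <| by
      filter_upwards [eventually_gt_atTop n] with m hm using (hsTerm_of_lt hm).symm
  constructor
  · exact tendsto_sum_Icc_atTop_of_nonneg (fun m hm => hsTerm_nonneg hc.le hh hn hm)
      (not_tendsto_nhds_of_tendsto_atTop hhsTerm 0)
  · refine tendsto_sum_Icc_atTop_of_nonneg (fun m hm => ?_)
      (not_tendsto_nhds_of_tendsto_atTop hterms 0)
    rw [← hsTerm_of_lt (by omega : n < m)]
    exact hsTerm_nonneg hc.le hh hn (by omega)
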